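/- Fix k ∈ ℕ and ε > 0, and let n ∈ ℕ satisfy n > 2^{k+1}/(3ε) + k − 1. Then the Hamming cube H_{2^k} embeds bi-Lipschitzly into the lamplighter graph Lam(W_{2,n}) with distortion at most 1 + ε, via the map sending x ∈ {0,1}^{2^k} to the pair (⋃_{i : x_i = 1} F_{k−1,i}^n, v₀), where v₀ is the root. -/

import Mathlib

open scoped symmDiff


/-- Condition for a pair `(l, r)` to encode a vertex of the subdivided tree `W_{θ,n}`:
`l` is the binary address (of length `k ≤ n`) of the nearest node at or below the vertex,
and `r` is the distance from the parent node of `l` along the subdivided edge into `l`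
(`r = θ^(n-k)` is the node `l` itself); the root is `([], 0)`. -/
def WCond (θ n : ℕ) (p : List Bool × ℕ) : Prop :=
  p.1.length ≤ n ∧ p.2 ≤ θ ^ n ∧ (p.1 = [] → p.2 = 0) ∧
    (p.1 ≠ [] → 1 ≤ p.2 ∧ p.2 ≤ θ ^ (n - p.1.length))

instance (θ n : ℕ) : DecidablePred (WCond θ n) := fun p => by unfold WCond; infer_instance

/-- Vertices of the tree `W_{θ,n}`. -/
def Wvertex (θ n : ℕ) : Type := { p : List Bool × ℕ // WCond θ n p }

instance (θ n : ℕ) : DecidableEq (Wvertex θ n) := Subtype.instDecidableEq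

/-- Weighted depth of a node `l` of the binary tree `B_n` in `W_{θ,n}`: the sum of the lengths
`θ^(n-i)` of the subdivided edges on the way from the root to `l`. -/
def wdepth (θ n : ℕ) (l : List Bool) : ℕ := ∑ i ∈ Finset.range l.length, θ ^ (n - (i + 1))

/-- Distance of a vertex of `W_{θ,n}` from the root. -/
def wheight (θ n : ℕ) (v : Wvertex θ n) : ℕ := wdepth θ n v.1.1.dropLast + v.1.2

/-- Longest common prefix of two lists. -/
def commonPrefix : List Bool → List Bool → List Bool
  | a :: as, b :: bs => if a = b then a :: commonPrefix as bs else []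
  | _, _ => []

/-- The shortest path metric of the tree `W_{θ,n}`. -/
def Wdist (θ n : ℕ) (x y : Wvertex θ n) : ℕ :=
  if x.1.1.isPrefixOf y.1.1 ∨ y.1.1.isPrefixOf x.1.1 then
    max (wheight θ n x) (wheight θ n y) - min (wheight θ n x) (wheight θ n y)
  else wheight θ n x + wheight θ n y - 2 * wdepth θ n (commonPrefix x.1.1 y.1.1)

/-- The root of `W_{θ,n}`. -/
def Wroot (θ n : ℕ) : Wvertex θ n := ⟨([], 0), by simp [WCond]⟩

/-- The tree `W_{θ,n}` as a simple graph: edges are pairs of vertices at distance 1. -/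
def WGraph (θ n : ℕ) : SimpleGraph (Wvertex θ n) where
  Adj x y := x ≠ y ∧ Wdist θ n x y = 1 ∧ Wdist θ n y x = 1
  symm := ⟨fun _ _ ⟨h1, h2, h3⟩ => ⟨h1.symm, h3, h2⟩⟩
  loopless := ⟨fun _ h => h.1 rfl⟩

/-- The lamplighter graph over a graph `G`: vertices are pairs (set of lamps on, position of
the lamplighter), and moves either shift the lamplighter along an edge of `G` or toggle the
lamp at the current position. -/
def Lam {V : Type*} [DecidableEq V] (G : SimpleGraph V) : SimpleGraph (Finset V × V) where
  Adj p q := (p.1 = q.1 ∧ G.Adj p.2 q.2) ∨ (p.2 = q.2 ∧ p.1 ∆ q.1 = {p.2})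
  symm := by
    refine ⟨?_⟩
    rintro ⟨A, x⟩ ⟨B, y⟩ (⟨h1, h2⟩ | ⟨h1, h2⟩)
    · exact Or.inl ⟨h1.symm, h2.symm⟩
    · exact Or.inr ⟨h1.symm, by rw [symmDiff_comm, h2, h1]⟩
  loopless := by
    refine ⟨?_⟩
    rintro ⟨A, x⟩ (⟨_, h⟩ | ⟨_, h⟩)
    · exact G.irrefl h
    · rw [symmDiff_self] at h
      exact Finset.singleton_ne_empty x h.symm
/-- The vertex set of `W_{θ,n}` is finite. -/
noncomputable instance (θ n : ℕ) : Fintype (Wvertex θ n) :=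
  Fintype.ofInjective
    (fun v => ((fun i : Fin n => v.1.1[(i : ℕ)]?),
      (⟨v.1.2, Nat.lt_succ_of_le v.2.2.1⟩ : Fin (θ ^ n + 1))))
    (by
      rintro ⟨⟨l, r⟩, hv⟩ ⟨⟨l', r'⟩, hv'⟩ h
      have h1 : ∀ i : Fin n, l[(i : ℕ)]? = l'[(i : ℕ)]? :=
        fun i => congrFun (congrArg Prod.fst h) i
      have h2 : r = r' := by
        have := congrArg Prod.snd h
        simpa using this
      have hl : l = l' := List.ext_getElem? (fun i => by
        by_cases hi : i < n
        · exact h1 ⟨i, hi⟩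
        · rw [List.getElem?_eq_none (le_trans hv.1 (not_lt.1 hi)),
            List.getElem?_eq_none (le_trans hv'.1 (not_lt.1 hi))])
      exact Subtype.ext (by simp only [Prod.mk.injEq]; exact ⟨hl, h2⟩))

/-- The union `⋃_{g : x g = 1} F_{k-1,g}^n` of the sets of lamps: `F_{k-1,g}^n` consists of
all vertices of `W_{2,n}` on or below the downward path into the level-`k` node with binary
address `g`. -/
noncomputable def lampSet (k n : ℕ) (x : (Fin k → Bool) → Bool) : Finset (Wvertex 2 n) :=
  Finset.univ.filter
    (fun v => ∃ g : Fin k → Bool, x g = true ∧ (List.ofFn g).isPrefixOf v.1.1)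

/-- The Hamming (`ℓ₁`) distance on the Hamming cube `H_I` with `I = {0,1}^k`. -/
def hamCubeDist {I : Type*} [Fintype I] [DecidableEq I] (x y : I → Bool) : ℕ :=
  (Finset.univ.filter fun i => x i ≠ y i).card

/-!
The lower bound is a traveling-salesman count in the lamplighter graph. Every walk from
`(A, v₀)` to `(B, v₀)` toggles each lamp `u ∈ A ∆ B` at least once, and since `u ≠ v₀` it must
enter and leave the subtree hanging at `u` at least once each; a single step is charged to at
most one of these events, because an edge of a tree leaves only the subtree of its lower end.
Hence every such walk has length at least `3 |A ∆ B|`, and `A ∆ B` is the union of one set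
`F_{k-1,i}` of size `w = (n - k + 1) 2^(n-k)` per coordinate where `x` and `y` differ.

For the upper bound, the lamps of one `F_{k-1,i}` are switched by walking from the root to the
level-`(k-1)` node above it, traversing `F_{k-1,i}` depth-first while toggling every vertex on the
way down each edge, and walking back, at cost `3 w + 2 ϱ_{k-1} ≤ 3 w + 2^(n+1)`. The hypothesis on `n` says `2^(n+1) ≤ 3 ε w`.
For `k = 0` the cube has only two points, and the map is an isometry up to scaling.
-/

lemma List.sum_countP_le_length {α ι : Type*} (I : Finset ι) (f : ι → α → Bool) (L : List α)
    (hf : ∀ a ∈ L, ∀ i ∈ I, ∀ j ∈ I, f i a → f j a → i = j) :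
    ∑ i ∈ I, L.countP (f i) ≤ L.length := by
  induction L with
  | nil => simp
  | cons a L ih =>
    have hle : ∑ i ∈ I, (if f i a then 1 else 0) ≤ 1 := by
      rw [← Finset.card_filter, Finset.card_le_one]
      intro i hi j hj
      rw [Finset.mem_filter] at hi hj
      exact hf a List.mem_cons_self i hi.1 j hj.1 hi.2 hj.2
    have := ih fun b hb => hf b (List.mem_cons_of_mem a hb)
    simp only [List.countP_cons, Finset.sum_add_distrib, List.length_cons]
    omega

lemma Finset.biUnion_symmDiff_biUnion {ι α : Type*} [DecidableEq ι] [DecidableEq α]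
    {F : ι → Finset α} (hF : Pairwise fun i j => Disjoint (F i) (F j)) (s t : Finset ι) :
    s.biUnion F ∆ t.biUnion F = (s ∆ t).biUnion F := by
  ext a
  simp only [Finset.mem_symmDiff, Finset.mem_biUnion]
  by_cases h : ∃ i, a ∈ F i
  · obtain ⟨i, hi⟩ := h
    have key : ∀ j, a ∈ F j ↔ j = i := fun j =>
      ⟨fun hj => by_contra fun hne => Finset.disjoint_left.1 (hF hne) hj hi, fun h => h ▸ hi⟩
    simp only [key, exists_eq_right]
  · simp only [not_exists] at h
    simp [h]

namespace SimpleGraph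

variable {V W : Type*} {G : SimpleGraph V} {G' : SimpleGraph W}

lemma Hom.edist_le (φ : G →g G') (u v : V) : G'.edist (φ u) (φ v) ≤ G.edist u v := by
  by_cases h : G.Reachable u v
  · obtain ⟨p, hp⟩ := h.exists_walk_length_eq_edist
    rw [← hp, ← Walk.length_map φ p]
    exact SimpleGraph.edist_le _
  · rw [edist_eq_top_of_not_reachable h]
    exact le_top

lemma edist_le_of_adj_succ (f : ℕ → V) {m : ℕ} (hf : ∀ i < m, G.Adj (f i) (f (i + 1))) :
    G.edist (f 0) (f m) ≤ m := by
  induction m with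
  | zero => simp
  | succ m ih =>
    calc G.edist (f 0) (f (m + 1)) ≤ G.edist (f 0) (f m) + G.edist (f m) (f (m + 1)) :=
          SimpleGraph.edist_triangle
      _ ≤ m + 1 := add_le_add (ih fun i hi => hf i (by omega))
          (edist_eq_one_iff_adj.2 (hf m (by omega))).le
      _ = ↑(m + 1) := by push_cast; rfl

end SimpleGraph

namespace Lam

open SimpleGraph

variable {V : Type*} [DecidableEq V] {G : SimpleGraph V}

lemma adj_toggle (A : Finset V) (u : V) : (Lam G).Adj (A, u) (A ∆ {u}, u) :=
  Or.inr ⟨rfl, symmDiff_symmDiff_cancel_left A {u}⟩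

def moveHom (A : Finset V) : G →g Lam G where
  toFun v := (A, v)
  map_rel' h := Or.inl ⟨rfl, h⟩

def toggleHom (C : Finset V) : Lam G →g Lam G where
  toFun p := (p.1 ∆ C, p.2)
  map_rel' := by
    rintro ⟨A, u⟩ ⟨B, v⟩ (⟨hAB, huv⟩ | ⟨huv, hAB⟩)
    · exact Or.inl ⟨congrArg (· ∆ C) hAB, huv⟩
    · refine Or.inr ⟨huv, ?_⟩
      simp only at huv hAB ⊢
      rw [symmDiff_symmDiff_symmDiff_comm, symmDiff_self, symmDiff_bot, hAB]

lemma edist_le_edist (A : Finset V) (u v : V) : (Lam G).edist (A, u) (A, v) ≤ G.edist u v :=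
  (moveHom A).edist_le u v

lemma edist_symmDiff (C A B : Finset V) (u v : V) :
    (Lam G).edist (A ∆ C, u) (B ∆ C, v) = (Lam G).edist (A, u) (B, v) := by
  refine le_antisymm ((toggleHom C).edist_le (A, u) (B, v)) ?_
  simpa [toggleHom, symmDiff_symmDiff_cancel_right] using
    (toggleHom (G := G) C).edist_le (A ∆ C, u) (B ∆ C, v)

lemma dist_symmDiff (C A B : Finset V) (u v : V) :
    (Lam G).dist (A ∆ C, u) (B ∆ C, v) = (Lam G).dist (A, u) (B, v) := by
  rw [SimpleGraph.dist, SimpleGraph.dist, edist_symmDiff]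

lemma edist_toggle_path_le (A : Finset V) (f : ℕ → V) {m : ℕ}
    (hf : ∀ i < m, G.Adj (f i) (f (i + 1))) (hinj : Set.InjOn f (Set.Ioc 0 m)) :
    (Lam G).edist (A, f 0) (A ∆ (Finset.Ioc 0 m).image f, f m) ≤ 2 * m := by
  induction m with
  | zero => simp [show A ∆ ∅ = A from symmDiff_bot A]
  | succ m ih =>
    set T := (Finset.Ioc 0 m).image f
    have hnew : f (m + 1) ∉ T := by
      simp only [T, Finset.mem_image, Finset.mem_Ioc, not_exists, not_and]
      intro i hi heq
      have := hinj ⟨hi.1, by omega⟩ ⟨by omega, le_rfl⟩ heq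
      omega
    have hT : (Finset.Ioc 0 (m + 1)).image f = insert (f (m + 1)) T := by
      rw [← Finset.image_insert]
      congr 1
      ext i
      simp only [Finset.mem_Ioc, Finset.mem_insert]
      omega
    have hlamps : A ∆ T ∆ {f (m + 1)} = A ∆ (Finset.Ioc 0 (m + 1)).image f := by
      rw [hT, symmDiff_assoc, (Finset.disjoint_singleton_right.2 hnew).symmDiff_eq_sup,
        Finset.sup_eq_union, Finset.union_comm, Finset.insert_eq]
    rw [← hlamps]
    calc (Lam G).edist (A, f 0) (A ∆ T ∆ {f (m + 1)}, f (m + 1))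
        ≤ (Lam G).edist (A, f 0) (A ∆ T, f m) + (Lam G).edist (A ∆ T, f m) (A ∆ T, f (m + 1)) +
          (Lam G).edist (A ∆ T, f (m + 1)) (A ∆ T ∆ {f (m + 1)}, f (m + 1)) :=
          SimpleGraph.edist_triangle.trans (add_le_add_left SimpleGraph.edist_triangle _)
      _ ≤ 2 * m + 1 + 1 := by
          gcongr
          · exact ih (fun i hi => hf i (by omega)) (hinj.mono (Set.Ioc_subset_Ioc_right (by omega)))
          · exact (edist_eq_one_iff_adj.2 (Or.inl ⟨rfl, hf m (by omega)⟩)).le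
          · exact (edist_eq_one_iff_adj.2 (adj_toggle _ _)).le
      _ = ↑(2 * (m + 1)) := by push_cast; ring

lemma edist_toggle_biUnion_le {ι : Type*} [DecidableEq ι] (F : ι → Finset V) (v : V) (c : ℕ)
    (hF : ∀ i A, (Lam G).edist (A, v) (A ∆ F i, v) ≤ c) (D : Finset ι)
    (hD : (D : Set ι).PairwiseDisjoint F) (A : Finset V) :
    (Lam G).edist (A, v) (A ∆ D.biUnion F, v) ≤ ↑(D.card * c) := by
  induction D using Finset.induction generalizing A with
  | empty => simp [show A ∆ ∅ = A from symmDiff_bot A]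
  | insert i D hi ih =>
    have hdisj : Disjoint (F i) (D.biUnion F) := by
      rw [Finset.disjoint_biUnion_right]
      exact fun j hj => hD (by simp) (by simp [hj]) (by rintro rfl; exact hi hj)
    have hlamps : A ∆ F i ∆ D.biUnion F = A ∆ (insert i D).biUnion F := by
      rw [Finset.biUnion_insert, symmDiff_assoc, hdisj.symmDiff_eq_sup, Finset.sup_eq_union]
    rw [← hlamps, Finset.card_insert_of_notMem hi]
    calc (Lam G).edist (A, v) (A ∆ F i ∆ D.biUnion F, v)
        ≤ (Lam G).edist (A, v) (A ∆ F i, v) +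
          (Lam G).edist (A ∆ F i, v) (A ∆ F i ∆ D.biUnion F, v) :=
          SimpleGraph.edist_triangle
      _ ≤ c + ↑(D.card * c) := add_le_add (hF i A) (ih (hD.subset (by simp)) _)
      _ = ↑((D.card + 1) * c) := by push_cast; ring

def togglesAt (u : V) (d : (Lam G).Dart) : Bool := decide (d.fst.2 = u ∧ d.fst.1 ≠ d.snd.1)

open scoped Classical in
noncomputable def crosses (C : Set V) (d : (Lam G).Dart) : Bool :=
  decide (d.fst.1 = d.snd.1 ∧ ¬(d.fst.2 ∈ C ↔ d.snd.2 ∈ C))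

lemma countP_togglesAt_pos {P Q : Finset V × V} (p : (Lam G).Walk P Q) {u : V}
    (hu : u ∈ P.1 ∆ Q.1) : 0 < p.darts.countP (togglesAt u) := by
  induction p with
  | nil =>
    rw [symmDiff_self] at hu
    exact absurd hu (Finset.notMem_empty u)
  | @cons P R Q h q ih =>
    rw [Walk.darts_cons, List.countP_cons]
    rcases Finset.mem_union.1 (symmDiff_triangle P.1 R.1 Q.1 hu) with hPR | hRQ
    · have : togglesAt u ⟨(P, R), h⟩ = true := by
        rcases h with ⟨hPR', -⟩ | ⟨-, hPR'⟩
        · simp [hPR'] at hPR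
        · rw [hPR', Finset.mem_singleton] at hPR
          refine decide_eq_true ⟨hPR.symm, fun h' => ?_⟩
          rw [h', symmDiff_self] at hPR'
          exact Finset.singleton_ne_empty _ hPR'.symm
      simp [this]
    · have := ih hRQ
      omega

lemma countP_crosses_pos {P Q : Finset V × V} (p : (Lam G).Walk P Q) {C : Set V}
    (hP : P.2 ∈ C) (hQ : Q.2 ∉ C) : 0 < p.darts.countP (crosses C) := by
  induction p with
  | nil => exact absurd hP hQ
  | @cons P R Q h q ih =>
    rw [Walk.darts_cons, List.countP_cons]
    by_cases hR : R.2 ∈ C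
    · have := ih hR hQ
      omega
    · have : crosses C ⟨(P, R), h⟩ = true := by
        rcases h with ⟨hPR, -⟩ | ⟨hPR, -⟩
        · simp only [crosses, decide_eq_true_eq]
          exact ⟨hPR, by tauto⟩
        · exact absurd (hPR ▸ hP) hR
      simp [this]

lemma two_le_countP_crosses {P Q : Finset V × V} (p : (Lam G).Walk P Q) {C : Set V} {u : V}
    (hu : u ∈ C) (hP : P.2 ∉ C) (hQ : Q.2 ∉ C) (hT : 0 < p.darts.countP (togglesAt u)) :
    2 ≤ p.darts.countP (crosses C) := by
  induction p with
  | nil => simp at hT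
  | @cons P R Q h q ih =>
    rw [Walk.darts_cons, List.countP_cons] at hT ⊢
    by_cases hR : R.2 ∈ C
    · have hc : crosses C ⟨(P, R), h⟩ = true := by
        rcases h with ⟨hPR, -⟩ | ⟨hPR, -⟩
        · simp only [crosses, decide_eq_true_eq]
          exact ⟨hPR, by tauto⟩
        · exact absurd (hPR ▸ hR) hP
      have := countP_crosses_pos q hR hQ
      simp only [hc, if_true]
      omega
    · have ht : togglesAt u ⟨(P, R), h⟩ = false := by
        simp only [togglesAt, decide_eq_false_iff_not]
        rintro ⟨rfl, -⟩
        exact hP hu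
      have := ih hR hQ (by simpa [ht] using hT)
      omega

theorem three_mul_card_le_length {P Q : Finset V × V} (p : (Lam G).Walk P Q) (S : Finset V)
    (C : V → Set V) (hS : S ⊆ P.1 ∆ Q.1) (hC : ∀ u ∈ S, u ∈ C u ∧ P.2 ∉ C u ∧ Q.2 ∉ C u)
    (hcut : ∀ a b, G.Adj a b → ∀ u ∈ S, ∀ v ∈ S,
      ¬(a ∈ C u ↔ b ∈ C u) → ¬(a ∈ C v ↔ b ∈ C v) → u = v) :
    3 * S.card ≤ p.length := by
  set f : V ⊕ V → (Lam G).Dart → Bool := Sum.elim togglesAt fun u => crosses (C u)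
  have hexcl : ∀ d ∈ p.darts, ∀ i ∈ S.disjSum S, ∀ j ∈ S.disjSum S, f i d → f j d → i = j := by
    rintro ⟨⟨⟨A, x⟩, ⟨B, y⟩⟩, hd⟩ - i hi j hj hfi hfj
    rcases i with u | u <;> rcases j with v | v <;>
      simp only [f, togglesAt, crosses, Sum.elim_inl, Sum.elim_inr, decide_eq_true_eq,
        Finset.inl_mem_disjSum, Finset.inr_mem_disjSum, Sum.inl.injEq, Sum.inr.injEq,
        reduceCtorEq] at hi hj hfi hfj ⊢
    · exact hfi.1.symm.trans hfj.1
    · exact hfi.2 hfj.1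
    · exact hfj.2 hfi.1
    · rcases hd with ⟨-, hxy⟩ | ⟨hxy, -⟩
      · exact hcut x y hxy u hi v hj hfi.2 hfj.2
      · exact absurd (iff_of_eq (congrArg (· ∈ C u) hxy)) hfi.2
  have hsum := List.sum_countP_le_length (S.disjSum S) f p.darts hexcl
  rw [Finset.sum_disjSum, p.length_darts] at hsum
  have htoggles : S.card • 1 ≤ ∑ u ∈ S, p.darts.countP (togglesAt u) :=
    Finset.card_nsmul_le_sum _ _ _ fun u hu => countP_togglesAt_pos p (hS hu)
  have hcrossings : S.card • 2 ≤ ∑ u ∈ S, p.darts.countP (crosses (C u)) :=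
    Finset.card_nsmul_le_sum _ _ _ fun u hu =>
      two_le_countP_crosses p (hC u hu).1 (hC u hu).2.1 (hC u hu).2.2
        (countP_togglesAt_pos p (hS hu))
  simp only [smul_eq_mul] at htoggles hcrossings
  simp only [f, Sum.elim_inl, Sum.elim_inr] at hsum
  omega

end Lam

section Tree

variable {θ n : ℕ}

lemma wdepth_mono {l m : List Bool} (h : l.length ≤ m.length) : wdepth θ n l ≤ wdepth θ n m :=
  Finset.sum_le_sum_of_subset (Finset.range_subset_range.2 h)

lemma wdepth_append_singleton (l : List Bool) (b : Bool) :
    wdepth θ n (l ++ [b]) = wdepth θ n l + θ ^ (n - (l.length + 1)) := by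
  simp [wdepth, Finset.sum_range_succ]

lemma wdepth_dropLast_add_pow {l : List Bool} (hl : l ≠ []) :
    wdepth θ n l.dropLast + θ ^ (n - l.length) = wdepth θ n l := by
  conv_rhs => rw [← List.dropLast_append_getLast hl, wdepth_append_singleton]
  have : l.dropLast.length + 1 = l.length := by
    rw [List.length_dropLast]
    have := List.length_pos_iff.2 hl
    omega
  rw [this]

lemma commonPrefix_prefix : ∀ l m : List Bool, commonPrefix l m <+: l ∧ commonPrefix l m <+: m
  | a :: as, b :: bs => by
    unfold commonPrefix
    split_ifs with h
    · subst h
      obtain ⟨h₁, h₂⟩ := commonPrefix_prefix as bs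
      exact ⟨List.cons_prefix_cons.2 ⟨rfl, h₁⟩, List.cons_prefix_cons.2 ⟨rfl, h₂⟩⟩
    · simp
  | [], _ => by simp [commonPrefix]
  | _ :: _, [] => by simp [commonPrefix]

namespace Wvertex

/-- `v ≤ u` iff `v` lies on the path from the root to `u`. -/
instance : PartialOrder (Wvertex θ n) where
  le v u := v.1.1 <+: u.1.1 ∧ (v.1.1 = u.1.1 → v.1.2 ≤ u.1.2)
  le_refl v := ⟨List.prefix_refl _, fun _ => le_rfl⟩
  le_trans v u w h₁ h₂ := ⟨h₁.1.trans h₂.1, fun h => by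
      have hvu : v.1.1 = u.1.1 := h₁.1.eq_of_length_le (h ▸ h₂.1.length_le)
      exact (h₁.2 hvu).trans (h₂.2 (hvu ▸ h))⟩
  le_antisymm v u h₁ h₂ := by
    have hl := h₁.1.eq_of_length_le h₂.1.length_le
    exact Subtype.ext (Prod.ext hl (le_antisymm (h₁.2 hl) (h₂.2 hl.symm)))

lemma le_or_le_of_prefix {v u : Wvertex θ n} (h : v.1.1 <+: u.1.1) : v ≤ u ∨ u ≤ v := by
  by_cases hl : v.1.1 = u.1.1
  · rcases le_total v.1.2 u.1.2 with hr | hr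
    · exact Or.inl ⟨h, fun _ => hr⟩
    · exact Or.inr ⟨hl ▸ List.prefix_refl _, fun _ => hr⟩
  · exact Or.inl ⟨h, fun h' => absurd h' hl⟩

lemma le_or_le_of_le {v w u : Wvertex θ n} (hv : v ≤ u) (hw : w ≤ u) : v ≤ w ∨ w ≤ v :=
  (List.prefix_or_prefix_of_prefix hv.1 hw.1).elim le_or_le_of_prefix
    fun h => (le_or_le_of_prefix h).symm

lemma eq_root_of_fst_eq_nil {u : Wvertex θ n} (h : u.1.1 = []) : u = Wroot θ n :=
  Subtype.ext (Prod.ext h (u.2.2.2.1 h))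

lemma le_root_iff {u : Wvertex θ n} : u ≤ Wroot θ n ↔ u = Wroot θ n :=
  ⟨fun h => eq_root_of_fst_eq_nil (List.prefix_nil.1 h.1), fun h => h ▸ le_rfl⟩

lemma wheight_le_wdepth (v : Wvertex θ n) : wheight θ n v ≤ wdepth θ n v.1.1 := by
  obtain ⟨⟨l, r⟩, hv⟩ := v
  by_cases hl : l = []
  · subst hl
    have hr : r = 0 := hv.2.2.1 rfl
    simp [wheight, hr]
  · show wdepth θ n l.dropLast + r ≤ wdepth θ n l
    rw [← wdepth_dropLast_add_pow hl]
    exact Nat.add_le_add_left (hv.2.2.2 hl).2 _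

lemma wdepth_lt_wheight {c : List Bool} {v : Wvertex θ n} (h : c <+: v.1.1) (hne : c ≠ v.1.1) :
    wdepth θ n c < wheight θ n v := by
  have hv : v.1.1 ≠ [] := fun h' => hne ((List.prefix_nil.1 (h' ▸ h)).trans h'.symm)
  have hlen : c.length ≤ v.1.1.dropLast.length := by
    have := h.length_le
    have : c.length ≠ v.1.1.length := fun h' => hne (h.eq_of_length_le h'.ge)
    rw [List.length_dropLast]
    omega
  have := wdepth_mono (θ := θ) (n := n) hlen
  have := (v.2.2.2.2 hv).1
  unfold wheight
  omega

lemma wheight_strictMono : StrictMono (wheight θ n) := by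
  intro v u h
  by_cases hl : v.1.1 = u.1.1
  · have hr : v.1.2 < u.1.2 :=
      lt_of_le_of_ne (h.le.2 hl) fun hr => h.ne (Subtype.ext (Prod.ext hl hr))
    unfold wheight
    rw [hl]
    omega
  · exact (wheight_le_wdepth v).trans_lt (wdepth_lt_wheight h.le.1 hl)

lemma adj_cases {a b : Wvertex θ n} (h : (WGraph θ n).Adj a b) :
    (a ≤ b ∧ wheight θ n b = wheight θ n a + 1) ∨ (b ≤ a ∧ wheight θ n a = wheight θ n b + 1) := by
  obtain ⟨hne, hab, -⟩ := h
  unfold Wdist at hab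
  split_ifs at hab with hp
  · simp only [List.isPrefixOf_iff_prefix] at hp
    have hcomp : a ≤ b ∨ b ≤ a :=
      hp.elim le_or_le_of_prefix fun h => (le_or_le_of_prefix h).symm
    rcases hcomp with h | h
    · have := wheight_strictMono (lt_of_le_of_ne h hne)
      exact Or.inl ⟨h, by omega⟩
    · have := wheight_strictMono (lt_of_le_of_ne h hne.symm)
      exact Or.inr ⟨h, by omega⟩
  · simp only [List.isPrefixOf_iff_prefix, not_or] at hp
    obtain ⟨hca, hcb⟩ := commonPrefix_prefix a.1.1 b.1.1
    have := wdepth_lt_wheight hca fun h => hp.1 (h ▸ hcb)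
    have := wdepth_lt_wheight hcb fun h => hp.2 (h ▸ hca)
    omega

lemma eq_of_not_iff_of_adj {a b u v : Wvertex θ n} (hab : (WGraph θ n).Adj a b)
    (hu : ¬(u ≤ a ↔ u ≤ b)) (hv : ¬(v ≤ a ↔ v ≤ b)) : u = v := by
  wlog h : a ≤ b ∧ wheight θ n b = wheight θ n a + 1 generalizing a b
  · exact this hab.symm (fun h' => hu h'.symm) (fun h' => hv h'.symm)
      ((adj_cases hab).resolve_left h)
  have key : ∀ w, ¬(w ≤ a ↔ w ≤ b) → w = b := by
    intro w hw
    have hwb : w ≤ b := by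
      by_contra hwb
      exact hw ⟨fun hwa => absurd (hwa.trans h.1) hwb, fun h' => absurd h' hwb⟩
    have hwa : ¬w ≤ a := fun hwa => hw ⟨fun _ => hwb, fun _ => hwa⟩
    have haw : a < w := lt_of_le_of_ne ((le_or_le_of_le hwb h.1).resolve_left hwa)
      fun haw => hwa (haw ▸ le_rfl)
    by_contra hne
    have := wheight_strictMono haw
    have := wheight_strictMono (lt_of_le_of_ne hwb hne)
    omega
  exact (key u hu).trans (key v hv).symm

end Wvertex

open Wvertex in
theorem three_mul_card_symmDiff_le_length {A B : Finset (Wvertex θ n)}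
    (hroot : Wroot θ n ∉ A ∆ B) (p : (Lam (WGraph θ n)).Walk (A, Wroot θ n) (B, Wroot θ n)) :
    3 * (A ∆ B).card ≤ p.length :=
  Lam.three_mul_card_le_length p (A ∆ B) Set.Ici subset_rfl
    (fun u hu =>
      have hu' : ¬u ≤ Wroot θ n := fun h => hroot (le_root_iff.1 h ▸ hu)
      ⟨Set.mem_Ici.2 le_rfl, hu', hu'⟩)
    fun _ _ hab _ _ _ _ hu hv => eq_of_not_iff_of_adj hab hu hv

end Tree

section Walks

variable {θ n : ℕ}

namespace Wvertex

/-- Junk value: the root when `(l, r)` encodes no vertex. -/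
def ofCode (θ n : ℕ) (l : List Bool) (r : ℕ) : Wvertex θ n :=
  if h : WCond θ n (l, r) then ⟨(l, r), h⟩ else Wroot θ n

def node (θ n : ℕ) (l : List Bool) : Wvertex θ n :=
  ofCode θ n l (if l = [] then 0 else θ ^ (n - l.length))

def edgePath (θ n : ℕ) (l : List Bool) (r : ℕ) : Wvertex θ n :=
  if r = 0 then node θ n l.dropLast else ofCode θ n l r

lemma ofCode_val {l : List Bool} {r : ℕ} (h : WCond θ n (l, r)) : (ofCode θ n l r).1 = (l, r) := by
  simp [ofCode, h]

lemma wcond_of_mem_Icc [NeZero θ] {l : List Bool} {r : ℕ} (hl : l ≠ []) (hln : l.length ≤ n)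
    (hr : r ∈ Set.Icc 1 (θ ^ (n - l.length))) : WCond θ n (l, r) :=
  ⟨hln, hr.2.trans (Nat.pow_le_pow_right (Nat.pos_of_neZero θ) (Nat.sub_le _ _)),
    fun h => absurd h hl, fun _ => hr⟩

lemma node_nil : node θ n [] = Wroot θ n := by
  simp only [node, ofCode, if_pos]
  exact dif_pos (Wroot θ n).2

lemma node_val [NeZero θ] {l : List Bool} (hl : l ≠ []) (hln : l.length ≤ n) :
    (node θ n l).1 = (l, θ ^ (n - l.length)) := by
  rw [node, if_neg hl, ofCode_val (wcond_of_mem_Icc hl hln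
    ⟨Nat.one_le_pow _ _ (Nat.pos_of_neZero θ), le_rfl⟩)]

lemma wheight_node [NeZero θ] {l : List Bool} (hln : l.length ≤ n) :
    wheight θ n (node θ n l) = wdepth θ n l := by
  by_cases hl : l = []
  · subst hl
    rw [node_nil]
    rfl
  · unfold wheight
    rw [node_val hl hln, wdepth_dropLast_add_pow hl]

lemma node_fst_prefix [NeZero θ] {l : List Bool} (hln : l.length ≤ n) : (node θ n l).1.1 <+: l := by
  by_cases hl : l = []
  · simp [hl, node_nil, Wroot]
  · rw [node_val hl hln]

lemma edgePath_val [NeZero θ] {l : List Bool} (hl : l ≠ []) (hln : l.length ≤ n) {r : ℕ}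
    (hr : r ∈ Set.Icc 1 (θ ^ (n - l.length))) : (edgePath θ n l r).1 = (l, r) := by
  rw [edgePath, if_neg (by have := hr.1; omega), ofCode_val (wcond_of_mem_Icc hl hln hr)]

lemma edgePath_zero (l : List Bool) : edgePath θ n l 0 = node θ n l.dropLast :=
  if_pos rfl

lemma edgePath_top [NeZero θ] {l : List Bool} (hl : l ≠ []) :
    edgePath θ n l (θ ^ (n - l.length)) = node θ n l := by
  rw [edgePath, if_neg (pow_ne_zero _ (NeZero.ne θ)), node, if_neg hl]

lemma wheight_edgePath [NeZero θ] {l : List Bool} (hl : l ≠ []) (hln : l.length ≤ n) {r : ℕ}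
    (hr : r ≤ θ ^ (n - l.length)) : wheight θ n (edgePath θ n l r) = wdepth θ n l.dropLast + r := by
  rcases Nat.eq_zero_or_pos r with rfl | hr0
  · rw [edgePath, if_pos rfl, wheight_node (l.dropLast_prefix.length_le.trans hln), add_zero]
  · unfold wheight
    rw [edgePath_val hl hln ⟨hr0, hr⟩]

lemma edgePath_fst_prefix [NeZero θ] {l : List Bool} (hl : l ≠ []) (hln : l.length ≤ n) {r : ℕ}
    (hr : r ≤ θ ^ (n - l.length)) : (edgePath θ n l r).1.1 <+: l := by
  rcases Nat.eq_zero_or_pos r with rfl | hr0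
  · rw [edgePath, if_pos rfl]
    exact (node_fst_prefix (l.dropLast_prefix.length_le.trans hln)).trans (List.dropLast_prefix l)
  · rw [edgePath_val hl hln ⟨hr0, hr⟩]

lemma adj_of_prefix {a b : Wvertex θ n} (h : a.1.1 <+: b.1.1)
    (hh : wheight θ n b = wheight θ n a + 1) : (WGraph θ n).Adj a b := by
  have hp : a.1.1.isPrefixOf b.1.1 := List.isPrefixOf_iff_prefix.2 h
  refine ⟨fun hab => by rw [hab] at hh; omega, ?_, ?_⟩ <;>
    simp only [Wdist, hp, true_or, or_true, if_true] <;> omega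

lemma edgePath_adj [NeZero θ] {l : List Bool} (hl : l ≠ []) (hln : l.length ≤ n) {r : ℕ}
    (hr : r < θ ^ (n - l.length)) :
    (WGraph θ n).Adj (edgePath θ n l r) (edgePath θ n l (r + 1)) := by
  apply adj_of_prefix
  · rw [edgePath_val hl hln ⟨by omega, hr⟩]
    exact edgePath_fst_prefix hl hln hr.le
  · rw [wheight_edgePath hl hln hr.le, wheight_edgePath hl hln hr, add_assoc]

lemma edgePath_injOn [NeZero θ] {l : List Bool} (hl : l ≠ []) (hln : l.length ≤ n) :
    Set.InjOn (edgePath θ n l) (Set.Ioc 0 (θ ^ (n - l.length))) := fun r hr s hs h => by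
  have := congrArg (·.1.2) h
  simpa only [edgePath_val hl hln ⟨hr.1, hr.2⟩, edgePath_val hl hln ⟨hs.1, hs.2⟩] using this

noncomputable def edgeInto (θ n : ℕ) (l : List Bool) : Finset (Wvertex θ n) :=
  Finset.univ.filter fun u => u.1.1 = l

/-- The set `F` of the paper for the edge into node `l`. -/
noncomputable def subtreeInto (θ n : ℕ) (l : List Bool) : Finset (Wvertex θ n) :=
  Finset.univ.filter fun u => l <+: u.1.1

lemma mem_subtreeInto {l : List Bool} {u : Wvertex θ n} : u ∈ subtreeInto θ n l ↔ l <+: u.1.1 := by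
  simp [subtreeInto]

lemma subtreeInto_nil : subtreeInto θ n [] = Finset.univ := by
  ext u
  simp [mem_subtreeInto]

lemma subtreeInto_eq_union (l : List Bool) : subtreeInto θ n l =
    edgeInto θ n l ∪ (subtreeInto θ n (l ++ [false]) ∪ subtreeInto θ n (l ++ [true])) := by
  ext u
  simp only [edgeInto, subtreeInto, Finset.mem_union, Finset.mem_filter, Finset.mem_univ, true_and]
  constructor
  · rintro ⟨t, ht⟩
    rw [← ht]
    rcases t with _ | ⟨_ | _, t⟩
    · simp
    · exact Or.inr (Or.inl ⟨t, by simp⟩)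
    · exact Or.inr (Or.inr ⟨t, by simp⟩)
  · rintro (h | h | h)
    · exact h ▸ List.prefix_refl _
    · exact (List.prefix_append l _).trans h
    · exact (List.prefix_append l _).trans h

lemma disjoint_edgeInto_subtreeInto (l : List Bool) (b : Bool) :
    Disjoint (edgeInto θ n l) (subtreeInto θ n (l ++ [b])) := by
  simp only [edgeInto, subtreeInto, Finset.disjoint_filter, Finset.mem_univ, forall_const]
  rintro u rfl h
  simpa using h.length_le

lemma disjoint_subtreeInto {l m : List Bool} (hlen : l.length = m.length) (hne : l ≠ m) :
    Disjoint (subtreeInto θ n l) (subtreeInto θ n m) := by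
  simp only [subtreeInto, Finset.disjoint_filter, Finset.mem_univ, forall_const]
  intro u hl hm
  rcases List.prefix_or_prefix_of_prefix hl hm with h | h
  · exact hne (h.eq_of_length_le hlen.ge)
  · exact hne (h.eq_of_length_le hlen.le).symm

lemma subtreeInto_eq_empty {l : List Bool} (h : n < l.length) : subtreeInto θ n l = ∅ := by
  simp only [subtreeInto, Finset.filter_eq_empty_iff, Finset.mem_univ, forall_const]
  intro u hu
  have := hu.length_le
  have := u.2.1
  omega

lemma symmDiff_subtreeInto (A : Finset (Wvertex θ n)) (l : List Bool) :
    A ∆ edgeInto θ n l ∆ subtreeInto θ n (l ++ [false]) ∆ subtreeInto θ n (l ++ [true]) =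
      A ∆ subtreeInto θ n l := by
  have union_eq {s t : Finset (Wvertex θ n)} (h : Disjoint s t) : s ∪ t = s ∆ t :=
    h.symmDiff_eq_sup.symm
  have h₀ := disjoint_edgeInto_subtreeInto (θ := θ) (n := n) l false
  have h₁ : Disjoint (edgeInto θ n l ∪ subtreeInto θ n (l ++ [false]))
      (subtreeInto θ n (l ++ [true])) := Finset.disjoint_union_left.2
    ⟨disjoint_edgeInto_subtreeInto l true, disjoint_subtreeInto (by simp) (by simp)⟩
  rw [subtreeInto_eq_union l, ← Finset.union_assoc, union_eq h₁, union_eq h₀]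
  simp only [symmDiff_assoc]

lemma image_edgePath [NeZero θ] {l : List Bool} (hl : l ≠ []) (hln : l.length ≤ n) :
    (Finset.Ioc 0 (θ ^ (n - l.length))).image (edgePath θ n l) = edgeInto θ n l := by
  ext u
  simp only [Finset.mem_image, Finset.mem_Ioc, edgeInto, Finset.mem_filter, Finset.mem_univ,
    true_and]
  constructor
  · rintro ⟨r, hr, rfl⟩
    rw [edgePath_val hl hln hr]
  · intro hu
    have hr := u.2.2.2.2 (hu ▸ hl)
    rw [hu] at hr
    refine ⟨u.1.2, hr, Subtype.ext ?_⟩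
    rw [edgePath_val hl hln hr, ← hu]

lemma card_edgeInto [NeZero θ] {l : List Bool} (hl : l ≠ []) (hln : l.length ≤ n) :
    (edgeInto θ n l).card = θ ^ (n - l.length) := by
  rw [← image_edgePath hl hln, Finset.card_image_of_injOn (by simpa using edgePath_injOn hl hln),
    Nat.card_Ioc, Nat.sub_zero]

lemma card_subtreeInto_eq_add [NeZero θ] {l : List Bool} (hl : l ≠ []) (hln : l.length ≤ n) :
    (subtreeInto θ n l).card = θ ^ (n - l.length) +
      ((subtreeInto θ n (l ++ [false])).card + (subtreeInto θ n (l ++ [true])).card) := by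
  rw [subtreeInto_eq_union l, Finset.card_union_of_disjoint, Finset.card_union_of_disjoint
    (disjoint_subtreeInto (by simp) (by simp)), card_edgeInto hl hln]
  exact Finset.disjoint_union_right.2
    ⟨disjoint_edgeInto_subtreeInto l false, disjoint_edgeInto_subtreeInto l true⟩

end Wvertex

open Wvertex

variable [NeZero θ]

theorem edist_toggle_subtreeInto_le {l : List Bool} (hl : l ≠ []) (A : Finset (Wvertex θ n)) :
    (Lam (WGraph θ n)).edist (A, node θ n l.dropLast) (A ∆ subtreeInto θ n l, node θ n l.dropLast)
      ≤ 3 * (subtreeInto θ n l).card := by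
  by_cases hln : l.length ≤ n
  swap
  · rw [subtreeInto_eq_empty (by omega), show A ∆ ∅ = A from symmDiff_bot A,
      SimpleGraph.edist_self]
    exact zero_le
  set E := edgeInto θ n l
  set S₀ := subtreeInto θ n (l ++ [false])
  set S₁ := subtreeInto θ n (l ++ [true])
  have hpath : ∀ r < θ ^ (n - l.length),
      (WGraph θ n).Adj (edgePath θ n l r) (edgePath θ n l (r + 1)) :=
    fun r hr => edgePath_adj hl hln hr
  have hdown : (Lam (WGraph θ n)).edist (A, node θ n l.dropLast) (A ∆ E, node θ n l) ≤
      2 * ↑(θ ^ (n - l.length)) := by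
    simpa only [edgePath_zero, edgePath_top hl, image_edgePath hl hln] using
      Lam.edist_toggle_path_le A (edgePath θ n l) hpath (edgePath_injOn hl hln)
  have hchild : ∀ (b : Bool) (B : Finset (Wvertex θ n)), (Lam (WGraph θ n)).edist (B, node θ n l)
      (B ∆ subtreeInto θ n (l ++ [b]), node θ n l) ≤ 3 * (subtreeInto θ n (l ++ [b])).card :=
    fun b B => by
      simpa only [List.dropLast_concat] using
        edist_toggle_subtreeInto_le (l := l ++ [b]) (by simp) B
  have hup : ∀ B : Finset (Wvertex θ n),
      (Lam (WGraph θ n)).edist (B, node θ n l) (B, node θ n l.dropLast) ≤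
        ↑(θ ^ (n - l.length)) := fun B => by
    rw [SimpleGraph.edist_comm]
    refine (Lam.edist_le_edist B _ _).trans ?_
    simpa only [edgePath_zero, edgePath_top hl] using SimpleGraph.edist_le_of_adj_succ _ hpath
  rw [← symmDiff_subtreeInto, card_subtreeInto_eq_add hl hln]
  calc (Lam (WGraph θ n)).edist (A, node θ n l.dropLast) (A ∆ E ∆ S₀ ∆ S₁, node θ n l.dropLast)
      ≤ (Lam (WGraph θ n)).edist (A, node θ n l.dropLast) (A ∆ E, node θ n l) +
        (Lam (WGraph θ n)).edist (A ∆ E, node θ n l) (A ∆ E ∆ S₀, node θ n l) +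
        (Lam (WGraph θ n)).edist (A ∆ E ∆ S₀, node θ n l) (A ∆ E ∆ S₀ ∆ S₁, node θ n l) +
        (Lam (WGraph θ n)).edist (A ∆ E ∆ S₀ ∆ S₁, node θ n l)
          (A ∆ E ∆ S₀ ∆ S₁, node θ n l.dropLast) :=
        SimpleGraph.edist_triangle.trans (add_le_add (SimpleGraph.edist_triangle.trans
          (add_le_add SimpleGraph.edist_triangle le_rfl)) le_rfl)
    _ ≤ 2 * ↑(θ ^ (n - l.length)) + 3 * S₀.card + 3 * S₁.card + ↑(θ ^ (n - l.length)) :=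
        add_le_add (add_le_add (add_le_add hdown (hchild false _)) (hchild true _)) (hup _)
    _ = ↑(3 * (θ ^ (n - l.length) + (S₀.card + S₁.card))) := by push_cast; ring
termination_by n + 1 - l.length
decreasing_by all_goals simp only [List.length_append, List.length_singleton]; omega

lemma edist_root_node_le {l : List Bool} (hln : l.length ≤ n) :
    (WGraph θ n).edist (Wroot θ n) (node θ n l) ≤ wdepth θ n l := by
  induction l using List.reverseRecOn with
  | nil => simp [node_nil]
  | append_singleton l b ih =>
    have hl : l ++ [b] ≠ [] := by simp
    have hpath : ∀ r < θ ^ (n - (l ++ [b]).length),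
        (WGraph θ n).Adj (edgePath θ n (l ++ [b]) r) (edgePath θ n (l ++ [b]) (r + 1)) :=
      fun r hr => edgePath_adj hl hln hr
    have hedge : (WGraph θ n).edist (node θ n l) (node θ n (l ++ [b])) ≤
        ↑(θ ^ (n - (l ++ [b]).length)) := by
      simpa only [edgePath_zero, List.dropLast_concat, edgePath_top hl] using
        SimpleGraph.edist_le_of_adj_succ _ hpath
    calc (WGraph θ n).edist (Wroot θ n) (node θ n (l ++ [b]))
        ≤ (WGraph θ n).edist (Wroot θ n) (node θ n l) +
          (WGraph θ n).edist (node θ n l) (node θ n (l ++ [b])) := SimpleGraph.edist_triangle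
      _ ≤ ↑(wdepth θ n l) + ↑(θ ^ (n - (l.length + 1))) :=
          add_le_add (ih ((List.prefix_append l [b]).length_le.trans hln)) (by simpa using hedge)
      _ = ↑(wdepth θ n (l ++ [b])) := by rw [wdepth_append_singleton, Nat.cast_add]

theorem edist_toggle_subtreeInto_root_le {l : List Bool} (hl : l ≠ []) (hln : l.length ≤ n)
    (A : Finset (Wvertex θ n)) :
    (Lam (WGraph θ n)).edist (A, Wroot θ n) (A ∆ subtreeInto θ n l, Wroot θ n) ≤
      ↑(3 * (subtreeInto θ n l).card + 2 * wdepth θ n l.dropLast) := by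
  have hroot : ∀ B : Finset (Wvertex θ n),
      (Lam (WGraph θ n)).edist (B, Wroot θ n) (B, node θ n l.dropLast) ≤ wdepth θ n l.dropLast :=
    fun B => (Lam.edist_le_edist B _ _).trans
      (edist_root_node_le (l.dropLast_prefix.length_le.trans hln))
  calc (Lam (WGraph θ n)).edist (A, Wroot θ n) (A ∆ subtreeInto θ n l, Wroot θ n)
      ≤ (Lam (WGraph θ n)).edist (A, Wroot θ n) (A, node θ n l.dropLast) +
        (Lam (WGraph θ n)).edist (A, node θ n l.dropLast)
          (A ∆ subtreeInto θ n l, node θ n l.dropLast) +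
        (Lam (WGraph θ n)).edist (A ∆ subtreeInto θ n l, node θ n l.dropLast)
          (A ∆ subtreeInto θ n l, Wroot θ n) :=
        SimpleGraph.edist_triangle.trans (add_le_add SimpleGraph.edist_triangle le_rfl)
    _ ≤ wdepth θ n l.dropLast + 3 * (subtreeInto θ n l).card + wdepth θ n l.dropLast := by
        rw [SimpleGraph.edist_comm (u := (A ∆ subtreeInto θ n l, node θ n l.dropLast))]
        exact add_le_add (add_le_add (hroot A) (edist_toggle_subtreeInto_le hl A)) (hroot _)
    _ = ↑(3 * (subtreeInto θ n l).card + 2 * wdepth θ n l.dropLast) := by push_cast; ring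

lemma reachable_toggle_univ (A : Finset (Wvertex θ n)) :
    (Lam (WGraph θ n)).Reachable (A, Wroot θ n) (A ∆ Finset.univ, Wroot θ n) := by
  have hsub : ∀ (b : Bool) (B : Finset (Wvertex θ n)),
      (Lam (WGraph θ n)).Reachable (B, Wroot θ n) (B ∆ subtreeInto θ n [b], Wroot θ n) :=
    fun b B => by
      have h := edist_toggle_subtreeInto_le (θ := θ) (n := n) (l := [b]) (by simp) B
      rw [List.dropLast_singleton, node_nil] at h
      exact SimpleGraph.reachable_of_edist_ne_top
        (ne_top_of_le_ne_top (by exact_mod_cast ENat.natCast_ne_top _) h)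
  have hedge : edgeInto θ n [] = {Wroot θ n} := by
    ext u
    simp only [edgeInto, Finset.mem_filter, Finset.mem_univ, true_and, Finset.mem_singleton]
    exact ⟨eq_root_of_fst_eq_nil, fun h => h ▸ rfl⟩
  rw [← subtreeInto_nil, ← symmDiff_subtreeInto, hedge]
  exact (Lam.adj_toggle A _).reachable.trans ((hsub false _).trans (hsub true _))

end Walks

section Binary

open Wvertex

variable {n k : ℕ}

lemma wdepth_two_add_pow {l : List Bool} (hln : l.length ≤ n) :
    wdepth 2 n l + 2 ^ (n - l.length) = 2 ^ n := by
  induction l using List.reverseRecOn with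
  | nil => simp [wdepth]
  | append_singleton l b ih =>
    simp only [List.length_append, List.length_singleton] at hln ⊢
    rw [wdepth_append_singleton, ← ih (by omega),
      show n - l.length = n - (l.length + 1) + 1 by omega, pow_succ]
    ring

lemma card_subtreeInto_two {l : List Bool} (hl : l ≠ []) (hln : l.length ≤ n) :
    (subtreeInto 2 n l).card = (n - l.length + 1) * 2 ^ (n - l.length) := by
  rw [card_subtreeInto_eq_add hl hln]
  rcases hln.lt_or_eq with hlt | heq
  · obtain ⟨e, he⟩ : ∃ e, n - l.length = e + 1 := ⟨n - l.length - 1, by omega⟩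
    have hchild : ∀ b : Bool, (subtreeInto 2 n (l ++ [b])).card = (e + 1) * 2 ^ e := fun b => by
      rw [card_subtreeInto_two (by simp) (by rw [List.length_append, List.length_singleton]; omega)]
      simp only [List.length_append, List.length_singleton]
      rw [show n - (l.length + 1) = e by omega]
    rw [hchild, hchild, he, pow_succ]
    ring
  · have hlong (b : Bool) : n < (l ++ [b]).length := by
      rw [List.length_append, List.length_singleton]
      omega
    rw [subtreeInto_eq_empty (hlong false), subtreeInto_eq_empty (hlong true), heq]
    simp
termination_by n - l.length

lemma root_notMem_subtreeInto {l : List Bool} (hl : l ≠ []) : Wroot 2 n ∉ subtreeInto 2 n l := by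
  rw [mem_subtreeInto]
  exact fun h => hl (List.prefix_nil.1 h)

lemma lampSet_symmDiff (x y : (Fin k → Bool) → Bool) :
    lampSet k n x ∆ lampSet k n y =
      (Finset.univ.filter fun g => x g ≠ y g).biUnion fun g => subtreeInto 2 n (List.ofFn g) := by
  have hlamp : ∀ z : (Fin k → Bool) → Bool, lampSet k n z =
      (Finset.univ.filter fun g => z g = true).biUnion fun g => subtreeInto 2 n (List.ofFn g) := by
    intro z
    ext u
    simp [lampSet, mem_subtreeInto, List.isPrefixOf_iff_prefix]
  rw [hlamp, hlamp, Finset.biUnion_symmDiff_biUnion]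
  · congr 1
    ext g
    cases hx : x g <;> cases hy : y g <;> simp [Finset.mem_symmDiff, hx, hy]
  · exact fun g g' hne => disjoint_subtreeInto (by simp) (List.ofFn_injective.ne hne)

lemma card_lampSet_symmDiff (hk : 1 ≤ k) (hkn : k ≤ n) (x y : (Fin k → Bool) → Bool) :
    (lampSet k n x ∆ lampSet k n y).card = hamCubeDist x y * ((n - k + 1) * 2 ^ (n - k)) := by
  rw [lampSet_symmDiff, Finset.card_biUnion, Finset.sum_const_nat fun g _ => ?_]
  · rfl
  · simpa using card_subtreeInto_two (l := List.ofFn g) (List.ofFn_eq_nil_iff.not.2 (by omega))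
      (by simpa using hkn)
  · exact fun g _ g' _ hne => disjoint_subtreeInto (by simp) (List.ofFn_injective.ne hne)

lemma root_notMem_lampSet_symmDiff (hk : 1 ≤ k) (x y : (Fin k → Bool) → Bool) :
    Wroot 2 n ∉ lampSet k n x ∆ lampSet k n y := by
  rw [lampSet_symmDiff, Finset.mem_biUnion]
  exact fun ⟨g, _, hg⟩ => root_notMem_subtreeInto (List.ofFn_eq_nil_iff.not.2 (by omega)) hg

lemma edist_lampSet_le (hk : 1 ≤ k) (hkn : k ≤ n) (x y : (Fin k → Bool) → Bool) :
    (Lam (WGraph 2 n)).edist (lampSet k n x, Wroot 2 n) (lampSet k n y, Wroot 2 n) ≤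
      ↑(hamCubeDist x y * (3 * ((n - k + 1) * 2 ^ (n - k)) + 2 * 2 ^ n)) := by
  have hcoord (g : Fin k → Bool) (A : Finset (Wvertex 2 n)) :
      (Lam (WGraph 2 n)).edist (A, Wroot 2 n) (A ∆ subtreeInto 2 n (List.ofFn g), Wroot 2 n) ≤
        ↑(3 * ((n - k + 1) * 2 ^ (n - k)) + 2 * 2 ^ n) := by
    have hl : List.ofFn g ≠ [] := List.ofFn_eq_nil_iff.not.2 (by omega)
    have hln : (List.ofFn g).length ≤ n := by simpa using hkn
    refine (edist_toggle_subtreeInto_root_le hl hln A).trans (Nat.cast_le.2 ?_)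
    have := Nat.le.intro (wdepth_two_add_pow ((List.dropLast_prefix _).length_le.trans hln))
    have := card_subtreeInto_two hl hln
    simp only [List.length_ofFn] at this
    omega
  have h := Lam.edist_toggle_biUnion_le _ _ _ hcoord (Finset.univ.filter fun g => x g ≠ y g)
    (fun g _ g' _ hne => disjoint_subtreeInto (by simp) (List.ofFn_injective.ne hne))
    (lampSet k n x)
  rwa [← lampSet_symmDiff, symmDiff_symmDiff_cancel_left] at h

theorem lampSet_dist_bounds (hk : 1 ≤ k) (hkn : k ≤ n) (x y : (Fin k → Bool) → Bool) :
    3 * ((n - k + 1) * 2 ^ (n - k)) * hamCubeDist x y ≤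
        (Lam (WGraph 2 n)).dist (lampSet k n x, Wroot 2 n) (lampSet k n y, Wroot 2 n) ∧
      (Lam (WGraph 2 n)).dist (lampSet k n x, Wroot 2 n) (lampSet k n y, Wroot 2 n) ≤
        hamCubeDist x y * (3 * ((n - k + 1) * 2 ^ (n - k)) + 2 * 2 ^ n) := by
  have hupper := edist_lampSet_le hk hkn x y
  obtain ⟨p, hp⟩ := (SimpleGraph.reachable_of_edist_ne_top
    (ne_top_of_le_ne_top (ENat.natCast_ne_top _) hupper)).exists_walk_length_eq_dist
  have hlower := three_mul_card_symmDiff_le_length (root_notMem_lampSet_symmDiff hk x y) p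
  rw [card_lampSet_symmDiff hk hkn, hp] at hlower
  exact ⟨by linarith, ENat.toNat_le_of_le_natCast hupper⟩

theorem lampSet_dist_eq_of_zero (n : ℕ) : ∃ c : ℕ, 0 < c ∧ ∀ x y : (Fin 0 → Bool) → Bool,
    (Lam (WGraph 2 n)).dist (lampSet 0 n x, Wroot 2 n) (lampSet 0 n y, Wroot 2 n) =
      c * hamCubeDist x y := by
  refine ⟨(Lam (WGraph 2 n)).dist (∅, Wroot 2 n) (Finset.univ, Wroot 2 n), ?_, fun x y => ?_⟩
  · have h := reachable_toggle_univ (θ := 2) (n := n) ∅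
    rw [show (∅ : Finset (Wvertex 2 n)) ∆ Finset.univ = Finset.univ from bot_symmDiff _] at h
    exact h.pos_dist_of_ne fun h' => by simpa using congrArg (Wroot 2 n ∈ ·.1) h'
  by_cases hxy : x = y
  · subst hxy
    simp [hamCubeDist]
  have hall : ∀ g, x g ≠ y g := fun g h =>
    hxy (funext fun g' => by rw [Subsingleton.elim g' g, h])
  have hham : hamCubeDist x y = 1 := by
    simp [hamCubeDist, Finset.filter_true_of_mem fun g _ => hall g]
  rw [← Lam.dist_symmDiff (lampSet 0 n x) (lampSet 0 n x) (lampSet 0 n y), symmDiff_self,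
    lampSet_symmDiff, Finset.filter_true_of_mem fun g _ => (hall g).symm,
    Finset.univ_unique, Finset.singleton_biUnion, hham, mul_one]
  simp [subtreeInto_nil]

end Binary

lemma two_mul_two_pow_le_of_gt {k n : ℕ} {ε : ℝ} (hε : 0 < ε)
    (hn : (n : ℝ) > 2 ^ (k + 1) / (3 * ε) + k - 1) :
    k ≤ n ∧ 2 * 2 ^ n ≤ ε * (3 * ((n - k + 1) * 2 ^ (n - k) : ℕ)) := by
  have hquot : 0 < (2 : ℝ) ^ (k + 1) / (3 * ε) := by positivity
  have hkn : k ≤ n := by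
    have : (k : ℝ) < n + 1 := by linarith
    exact_mod_cast Nat.lt_succ_iff.1 (by exact_mod_cast this)
  refine ⟨hkn, ?_⟩
  have hlt : (2 : ℝ) ^ (k + 1) < 3 * ε * (n - k + 1) := by
    rw [← div_lt_iff₀' (by positivity)]
    linarith
  have hpow : (2 : ℝ) * 2 ^ n = 2 ^ (k + 1) * 2 ^ (n - k) := by
    rw [← pow_succ', ← pow_add]
    congr 1
    omega
  rw [hpow]
  push_cast [Nat.cast_sub hkn]
  nlinarith [pow_pos (two_pos : (0 : ℝ) < 2) (n - k)]

/-- for `k ∈ ℕ`, `ε > 0`, and `n > 2^(k+1)/(3ε) + k - 1`, the Hamming cube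
`H_{2^k}` (indexed by `I = {0,1}^k`) embeds into `Lam(W_{2,n})` with distortion at most
`1 + ε` via the map `x ↦ (⋃_{g : x g = 1} F_{k-1,g}^n, v₀)`, `v₀` the root. -/
theorem Hamming_cube_into_lamplighter (k : ℕ) (ε : ℝ) (hε : 0 < ε) (n : ℕ)
    (hn : (n : ℝ) > 2 ^ (k + 1) / (3 * ε) + k - 1) :
    ∃ lam : ℝ, 0 < lam ∧ ∀ x y : (Fin k → Bool) → Bool,
      lam * hamCubeDist x y ≤
          ((Lam (WGraph 2 n)).dist (lampSet k n x, Wroot 2 n) (lampSet k n y, Wroot 2 n) : ℝ) ∧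
        ((Lam (WGraph 2 n)).dist (lampSet k n x, Wroot 2 n) (lampSet k n y, Wroot 2 n) : ℝ) ≤
          (1 + ε) * lam * hamCubeDist x y := by
  rcases Nat.eq_zero_or_pos k with rfl | hk
  · obtain ⟨c, hc, hdist⟩ := lampSet_dist_eq_of_zero n
    refine ⟨c, by exact_mod_cast hc, fun x y => ?_⟩
    rw [hdist]
    push_cast
    refine ⟨le_rfl, ?_⟩
    rw [mul_assoc]
    exact le_mul_of_one_le_left (by positivity) (by linarith)
  obtain ⟨hkn, hslack⟩ := two_mul_two_pow_le_of_gt hε hn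
  have hbounds := lampSet_dist_bounds hk hkn
  set w := (n - k + 1) * 2 ^ (n - k)
  refine ⟨3 * w, by positivity, fun x y => ⟨by exact_mod_cast (hbounds x y).1, ?_⟩⟩
  calc ((Lam (WGraph 2 n)).dist (lampSet k n x, Wroot 2 n) (lampSet k n y, Wroot 2 n) : ℝ)
      ≤ hamCubeDist x y * (3 * w + 2 * 2 ^ n) := by exact_mod_cast (hbounds x y).2
    _ ≤ hamCubeDist x y * (3 * w + ε * (3 * w)) := by gcongr
    _ = (1 + ε) * (3 * w) * hamCubeDist x y := by ring
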